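/- arXiv:0810.3327 — 5 statements merged into one kernel-verified Lean document; each statement's English description precedes it below -/
import Mathlib

section
/- For every integer k ≥ 1 and all real numbers x and y, the falling factorial of the product satisfies (xy)^(k) = ∑_{l=1}^{k} ∑_{m=1}^{k} c^{(k)}_{l,m} · x^(l) · y^(m). -/
/-- Unsigned Stirling numbers of the first kind: the number of permutations of
`n` elements with exactly `p` cycles. -/
def stirling1 : ℕ → ℕ → ℕ
  | 0, 0 => 1
  | 0, _ + 1 => 0
  | _ + 1, 0 => 0
  | n + 1, p + 1 => n * stirling1 n (p + 1) + stirling1 n p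

/-- Stirling numbers of the second kind: the number of partitions of an
`n`-element set into `p` nonempty blocks (`stirling2 p l = 0` when `p < l`). -/
def stirling2 : ℕ → ℕ → ℕ
  | 0, 0 => 1
  | 0, _ + 1 => 0
  | _ + 1, 0 => 0
  | n + 1, p + 1 => (p + 1) * stirling2 n (p + 1) + stirling2 n p

/-- The coefficients `c^(k)_{l,m} = ∑_{p=1}^k (-1)^(k-p) s(k,p) S(p,l) S(p,m)`. -/
def c (k l m : ℕ) : ℤ :=
  ∑ p ∈ Finset.Icc 1 k,
    (-1 : ℤ) ^ (k - p) * (stirling1 k p : ℤ) * (stirling2 p l : ℤ) * (stirling2 p m : ℤ)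

lemma stirling1_eq_zero : ∀ n p, n < p → stirling1 n p = 0 := by
  intro n
  induction n with
  | zero => intro p h; cases p with
    | zero => omega
    | succ q => simp [stirling1]
  | succ n ih =>
    intro p h
    cases p with
    | zero => omega
    | succ q =>
      show n * stirling1 n (q+1) + stirling1 n q = 0
      rw [ih (q+1) (by omega), ih q (by omega)]; ring

lemma stirling2_eq_zero : ∀ n p, n < p → stirling2 n p = 0 := by
  intro n
  induction n with
  | zero => intro p h; cases p with
    | zero => omega
    | succ q => simp [stirling2]
  | succ n ih =>
    intro p h
    cases p with
    | zero => omega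
    | succ q =>
      show (q+1) * stirling2 n (q+1) + stirling2 n q = 0
      rw [ih (q+1) (by omega), ih q (by omega)]; ring

lemma desc_eval (k : ℕ) (t : ℝ) :
    (descPochhammer ℝ k).eval t =
      ∑ p ∈ Finset.range (k+1), (-1:ℝ)^(k-p) * (stirling1 k p : ℝ) * t ^ p := by
  induction k with
  | zero => simp [stirling1]
  | succ k ih =>
    rw [descPochhammer_succ_eval, ih]
    rw [Finset.sum_range_succ' (fun p => (-1:ℝ)^(k+1-p) * (stirling1 (k+1) p : ℝ) * t ^ p) (k+1)]
    have h0 : stirling1 (k+1) 0 = 0 := rfl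
    rw [h0]
    simp only [Nat.cast_zero, mul_zero, zero_mul, add_zero, pow_zero, mul_one]
    have hrec : ∀ i, stirling1 (k+1) (i+1) = k * stirling1 k (i+1) + stirling1 k i := fun i => rfl
    have : ∀ i ∈ Finset.range (k+1),
        (-1:ℝ)^(k+1-(i+1)) * (stirling1 (k+1) (i+1) : ℝ) * t ^ (i+1)
        = (-1:ℝ)^(k-i) * (stirling1 k i : ℝ) * t ^ i * t
          + ((-1:ℝ)^(k-i) * ((k:ℝ) * (stirling1 k (i+1) : ℝ)) * t ^ (i+1)) := by
      intro i hi
      rw [hrec, Nat.succ_sub_succ]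
      push_cast
      ring
    have hk0 : (k:ℝ) * (stirling1 k 0 : ℝ) = 0 := by
      cases k with
      | zero => simp
      | succ n => have : stirling1 (n+1) 0 = 0 := rfl; rw [this]; simp
    have key : ∑ x ∈ Finset.range (k+1), (-1:ℝ)^(k-x) * ((k:ℝ) * (stirling1 k (x+1):ℝ)) * t^(x+1)
        = -((∑ p ∈ Finset.range (k+1), (-1:ℝ)^(k-p) * (stirling1 k p : ℝ) * t ^ p) * (k:ℝ)) := by
      rw [Finset.sum_range_succ, stirling1_eq_zero k (k+1) (by omega)]
      simp only [Nat.cast_zero, mul_zero, zero_mul, add_zero]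
      rw [Finset.sum_range_succ' (fun p => (-1:ℝ)^(k-p) * (stirling1 k p : ℝ) * t ^ p) k]
      have h2 : ∀ i ∈ Finset.range k,
          (-1:ℝ)^(k-i) * ((k:ℝ) * (stirling1 k (i+1):ℝ)) * t^(i+1)
          = -((-1:ℝ)^(k-(i+1)) * (stirling1 k (i+1):ℝ) * t^(i+1)) * (k:ℝ) := by
        intro i hi
        simp only [Finset.mem_range] at hi
        have hki : k - i = (k - (i+1)) + 1 := by omega
        rw [hki, pow_succ]
        ring
      have h3 : ((-1:ℝ)^(k-0) * (stirling1 k 0:ℝ) * t^0) * (k:ℝ) = 0 := by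
        rw [Nat.sub_zero, pow_zero, mul_one, mul_assoc, mul_comm ((stirling1 k 0:ℝ)), hk0,
          mul_zero]
      rw [Finset.sum_congr rfl h2, add_mul, h3, add_zero]
      simp only [neg_mul]
      rw [Finset.sum_neg_distrib, ← Finset.sum_mul]
    rw [Finset.sum_congr rfl this, Finset.sum_add_distrib, ← Finset.sum_mul, key]
    ring

lemma stirling2_succ_zero (n : ℕ) : stirling2 (n+1) 0 = 0 := rfl

lemma pow_eq_sum_desc (p : ℕ) (t : ℝ) :
    t ^ p = ∑ l ∈ Finset.range (p+1), (stirling2 p l : ℝ) * (descPochhammer ℝ l).eval t := by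
  induction p with
  | zero => simp [stirling2]
  | succ p ih =>
    have hmul : ∀ l : ℕ, t * (descPochhammer ℝ l).eval t
        = (descPochhammer ℝ (l+1)).eval t + (l:ℝ) * (descPochhammer ℝ l).eval t := by
      intro l
      rw [descPochhammer_succ_eval]
      ring
    have hrec : ∀ i, stirling2 (p+1) (i+1) = (i+1) * stirling2 p (i+1) + stirling2 p i :=
      fun i => rfl
    rw [pow_succ, ih, Finset.sum_mul]
    rw [Finset.sum_range_succ'
      (fun l => (stirling2 (p+1) l : ℝ) * (descPochhammer ℝ l).eval t) (p+1)]
    rw [stirling2_succ_zero]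
    simp only [Nat.cast_zero, zero_mul, add_zero]
    have hterm : ∀ i ∈ Finset.range (p+1),
        (stirling2 p i : ℝ) * (descPochhammer ℝ i).eval t * t
        = (stirling2 p i : ℝ) * (descPochhammer ℝ (i+1)).eval t
          + (i:ℝ) * ((stirling2 p i : ℝ) * (descPochhammer ℝ i).eval t) := by
      intro i hi
      rw [show (stirling2 p i : ℝ) * (descPochhammer ℝ i).eval t * t
        = (stirling2 p i : ℝ) * (t * (descPochhammer ℝ i).eval t) from by ring, hmul]
      ring
    rw [Finset.sum_congr rfl hterm, Finset.sum_add_distrib]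
    have hterm2 : ∀ i ∈ Finset.range (p+2),
        (stirling2 (p+1) i : ℝ) * (descPochhammer ℝ i).eval t = (stirling2 (p+1) i : ℝ) * (descPochhammer ℝ i).eval t := fun _ _ => rfl
    have hsplit : ∀ i ∈ Finset.range (p+1),
        (stirling2 (p+1) (i+1) : ℝ) * (descPochhammer ℝ (i+1)).eval t
        = ((i:ℝ)+1) * (stirling2 p (i+1) : ℝ) * (descPochhammer ℝ (i+1)).eval t
          + (stirling2 p i : ℝ) * (descPochhammer ℝ (i+1)).eval t := by
      intro i hi
      rw [hrec]
      push_cast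
      ring
    rw [Finset.sum_congr rfl hsplit, Finset.sum_add_distrib, add_comm]
    congr 1
    -- ∑_{i∈range(p+1)} (i+1) S(p,i+1) D_{i+1} = ∑_{i∈range(p+1)} i * (S(p,i) D_i)
    rw [Finset.sum_range_succ'
      (fun i => (i:ℝ) * ((stirling2 p i : ℝ) * (descPochhammer ℝ i).eval t)) p]
    simp only [Nat.cast_zero, zero_mul, add_zero]
    rw [Finset.sum_range_succ]
    rw [stirling2_eq_zero p (p+1) (by omega)]
    simp only [Nat.cast_zero, zero_mul, mul_zero, add_zero]
    refine Finset.sum_congr rfl fun i hi => ?_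
    push_cast
    ring

lemma pow_eq_sum_desc' (p n : ℕ) (h : p ≤ n) (t : ℝ) :
    t ^ p = ∑ l ∈ Finset.range (n+1), (stirling2 p l : ℝ) * (descPochhammer ℝ l).eval t := by
  rw [pow_eq_sum_desc]
  refine Finset.sum_subset (by intro a ha; simp only [Finset.mem_range] at *; omega) ?_
  intro l hl hnl
  simp only [Finset.mem_range, not_lt] at hnl
  rw [stirling2_eq_zero p l (by omega)]
  simp


/-- The falling factorial of a product: `(xy)^(k) = ∑_{l,m=1}^k c^(k)_{l,m} x^(l) y^(m)`. -/
theorem falling_factorial_of_product (k : ℕ) (hk : 1 ≤ k) (x y : ℝ) :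
    (descPochhammer ℝ k).eval (x * y) =
      ∑ l ∈ Finset.Icc 1 k, ∑ m ∈ Finset.Icc 1 k,
        (c k l m : ℝ) * (descPochhammer ℝ l).eval x * (descPochhammer ℝ m).eval y := by
  have hins : Finset.range (k+1) = insert 0 (Finset.Icc 1 k) := by
    ext a; simp only [Finset.mem_range, Finset.mem_insert, Finset.mem_Icc]; omega
  have h0n : (0:ℕ) ∉ Finset.Icc 1 k := by simp
  rw [desc_eval]
  have hx : ∀ p ∈ Finset.range (k+1), (-1:ℝ)^(k-p) * (stirling1 k p:ℝ) * (x*y)^p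
      = ∑ l ∈ Finset.range (k+1), ∑ m ∈ Finset.range (k+1),
          (-1:ℝ)^(k-p) * (stirling1 k p:ℝ) * (stirling2 p l:ℝ) * (stirling2 p m:ℝ)
            * (descPochhammer ℝ l).eval x * (descPochhammer ℝ m).eval y := by
    intro p hp
    simp only [Finset.mem_range] at hp
    rw [mul_pow, pow_eq_sum_desc' p k (by omega) x, pow_eq_sum_desc' p k (by omega) y,
      Finset.sum_mul_sum, Finset.mul_sum]
    refine Finset.sum_congr rfl fun l hl => ?_
    rw [Finset.mul_sum]
    refine Finset.sum_congr rfl fun m hm => ?_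
    ring
  rw [Finset.sum_congr rfl hx, Finset.sum_comm]
  have hswap : ∀ l ∈ Finset.range (k+1),
      (∑ p ∈ Finset.range (k+1), ∑ m ∈ Finset.range (k+1),
        (-1:ℝ)^(k-p) * (stirling1 k p:ℝ) * (stirling2 p l:ℝ) * (stirling2 p m:ℝ)
          * (descPochhammer ℝ l).eval x * (descPochhammer ℝ m).eval y)
      = ∑ m ∈ Finset.range (k+1), ∑ p ∈ Finset.range (k+1),
        (-1:ℝ)^(k-p) * (stirling1 k p:ℝ) * (stirling2 p l:ℝ) * (stirling2 p m:ℝ)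
          * (descPochhammer ℝ l).eval x * (descPochhammer ℝ m).eval y :=
    fun l _ => Finset.sum_comm
  rw [Finset.sum_congr rfl hswap]
  -- now: ∑ l ∑ m ∑ p over range (k+1)
  have hinner : ∀ l m : ℕ,
      (∑ p ∈ Finset.range (k+1),
        (-1:ℝ)^(k-p) * (stirling1 k p:ℝ) * (stirling2 p l:ℝ) * (stirling2 p m:ℝ)
          * (descPochhammer ℝ l).eval x * (descPochhammer ℝ m).eval y)
      = (c k l m : ℝ) * (descPochhammer ℝ l).eval x * (descPochhammer ℝ m).eval y := by
    intro l m
    rw [hins, Finset.sum_insert h0n]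
    have hs10 : (stirling1 k 0 : ℝ) = 0 := by
      obtain ⟨n, rfl⟩ : ∃ n, k = n + 1 := ⟨k - 1, by omega⟩
      norm_cast
    rw [hs10]
    simp only [mul_zero, zero_mul, zero_add]
    rw [c]
    push_cast
    rw [Finset.sum_mul, Finset.sum_mul]
  have hinner' : ∀ l ∈ Finset.range (k+1), ∀ m ∈ Finset.range (k+1), True := fun _ _ _ _ => trivial
  rw [Finset.sum_congr rfl (fun l _ => Finset.sum_congr rfl (fun m _ => hinner l m))]
  -- now shrink outer sums from range (k+1) to Icc 1 k
  have hcl0 : ∀ m, c k 0 m = 0 := by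
    intro m
    rw [c]
    refine Finset.sum_eq_zero fun p hp => ?_
    simp only [Finset.mem_Icc] at hp
    obtain ⟨q, rfl⟩ : ∃ q, p = q + 1 := ⟨p - 1, by omega⟩
    rw [stirling2_succ_zero]
    push_cast
    ring
  have hcm0 : ∀ l, c k l 0 = 0 := by
    intro l
    rw [c]
    refine Finset.sum_eq_zero fun p hp => ?_
    simp only [Finset.mem_Icc] at hp
    obtain ⟨q, rfl⟩ : ∃ q, p = q + 1 := ⟨p - 1, by omega⟩
    rw [stirling2_succ_zero]
    push_cast
    ring
  rw [hins, Finset.sum_insert h0n]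
  have hz1 : (∑ m ∈ insert 0 (Finset.Icc 1 k),
      (c k 0 m : ℝ) * (descPochhammer ℝ 0).eval x * (descPochhammer ℝ m).eval y) = 0 := by
    refine Finset.sum_eq_zero fun m hm => ?_
    rw [hcl0 m]
    simp
  rw [hz1, zero_add]
  refine Finset.sum_congr rfl fun l hl => ?_
  rw [Finset.sum_insert h0n, hcm0 l]
  simp
end

section
/- For every integer k ≥ 1, the real symmetric k×k matrix C^{(k)} with entries c^{(k)}_{l,m} (1 ≤ l,m ≤ k) has exactly ⌈k/2⌉ positive eigenvalues and exactly k − ⌈k/2⌉ negative eigenvalues (counted with multiplicity); in particular 0 is not an eigenvalue. -/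
/-!
Reading the defining sum as a matrix product gives `C^(k) = Sᵀ D S` with `S = (S(p, l))_{p,l}`,
which is lower unitriangular since `S(p, l) = 0` for `p < l` and `S(p, p) = 1`, and
`D = diag((-1)^(k-p) s(k, p))`. Thus `C^(k)` is congruent to `D`, and by the spectral theorem
also to the diagonal matrix of its eigenvalues. By Sylvester's law of inertia, both diagonals have
as many positive and as many negative entries as the quadratic form of `C^(k)` has positive and
negative signature. As `s(k, p) > 0` for `1 ≤ p ≤ k`, the sign of the `p`-th entry of `D` is
`(-1)^(k-p)`: positive for `⌈k/2⌉` indices, negative for the other `⌊k/2⌋`, never zero.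
-/

open Finset Matrix QuadraticMap

theorem stirling1_eq_stirlingFirst : stirling1 = Nat.stirlingFirst := by
  funext n p
  induction n generalizing p with
  | zero => cases p <;> rfl
  | succ n ih => cases p <;> simp [stirling1, Nat.stirlingFirst_succ_succ, ih]

theorem stirling2_eq_stirlingSecond : stirling2 = Nat.stirlingSecond := by
  funext n p
  induction n generalizing p with
  | zero => cases p <;> rfl
  | succ n ih => cases p <;> simp [stirling2, Nat.stirlingSecond_succ_succ, ih]

theorem Nat.stirlingFirst_pos : ∀ {n k : ℕ}, 0 < k → k ≤ n → 0 < stirlingFirst n k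
  | _, 0, hk, _ => absurd hk (lt_irrefl 0)
  | 0, _ + 1, _, hkn => absurd hkn (not_succ_le_zero _)
  | n + 1, 1, _, _ => by rw [stirlingFirst_one_right]; positivity
  | n + 1, k + 2, _, hkn => by
    rw [stirlingFirst_succ_succ]
    have := stirlingFirst_pos (n := n) (k := k + 1) k.succ_pos (by omega)
    omega

theorem stirling1_pos {n k : ℕ} (hk : 0 < k) (hkn : k ≤ n) : 0 < stirling1 n k :=
  stirling1_eq_stirlingFirst ▸ Nat.stirlingFirst_pos hk hkn

theorem Fin.card_filter_odd_rev (k : ℕ) : #{p : Fin k | Odd (p.rev : ℕ)} = k / 2 := by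
  rw [card_equiv Fin.revPerm (t := {p : Fin k | Odd (p : ℕ)}) (by simp), card_filter,
    Fin.sum_univ_eq_sum_range (fun e => if Odd e then 1 else 0), ← card_filter,
    ← Nat.card_multiples k 2]
  simp only [← even_iff_two_dvd, Nat.even_add_one, Nat.not_even_iff_odd]

theorem card_filter_pos_add_card_filter_neg_eq_card_iff {ι α : Type*} [Fintype ι]
    [LinearOrder α] [Zero α] {w : ι → α} :
    #{i | 0 < w i} + #{i | w i < 0} = Fintype.card ι ↔ ∀ i, w i ≠ 0 := by
  classical
  have hdisj : Disjoint (univ.filter (0 < w ·)) (univ.filter (w · < 0)) :=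
    disjoint_filter.2 fun _ _ h₁ h₂ => lt_asymm h₁ h₂
  rw [← card_union_of_disjoint hdisj, ← filter_or, card_eq_iff_eq_univ, filter_eq_self]
  simp only [mem_univ, forall_const]
  exact forall_congr' fun i => or_comm.trans ne_iff_lt_or_gt.symm

namespace Matrix

variable {n 𝕜 : Type*} [Fintype n] [DecidableEq n] [Field 𝕜]

theorem toQuadraticForm'_equivalent_weightedSumSquares {M A : Matrix n n 𝕜} {d : n → 𝕜}
    (hA : IsUnit A.det) (hM : M = Aᵀ * diagonal d * A) :
    M.toQuadraticForm'.Equivalent (weightedSumSquares 𝕜 d) := by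
  let := A.invertibleOfIsUnitDet hA
  refine ⟨⟨A.toLinearEquiv' this, fun x => ?_⟩⟩
  rw [toQuadraticForm', LinearMap.BilinMap.toQuadraticMap_apply, toLinearMap₂'_apply', hM,
    ← mulVec_mulVec, ← mulVec_mulVec, dotProduct_mulVec, vecMul_transpose,
    weightedSumSquares_apply]
  simp [dotProduct, mulVec_diagonal, mul_left_comm]

variable [LinearOrder 𝕜] [IsStrictOrderedRing 𝕜]

theorem sigPos_toQuadraticForm' {M A : Matrix n n 𝕜} {d : n → 𝕜}
    (hA : IsUnit A.det) (hM : M = Aᵀ * diagonal d * A) :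
    sigPos M.toQuadraticForm' = #{i | 0 < d i} := by
  classical
  rw [QuadraticForm.sigPos_of_equiv_weightedSumSquares
    (toQuadraticForm'_equivalent_weightedSumSquares hA hM), Set.ncard_eq_toFinset_card',
    Set.toFinset_ofPred]

theorem sigNeg_toQuadraticForm' {M A : Matrix n n 𝕜} {d : n → 𝕜}
    (hA : IsUnit A.det) (hM : M = Aᵀ * diagonal d * A) :
    sigNeg M.toQuadraticForm' = #{i | d i < 0} := by
  classical
  rw [QuadraticForm.sigNeg_of_equiv_weightedSumSquares
    (toQuadraticForm'_equivalent_weightedSumSquares hA hM), Set.ncard_eq_toFinset_card',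
    Set.toFinset_ofPred]

theorem IsHermitian.eq_transpose_mul_diagonal_eigenvalues_mul {A : Matrix n n ℝ}
    (hA : A.IsHermitian) :
    A = (star (hA.eigenvectorUnitary : Matrix n n ℝ))ᵀ * diagonal hA.eigenvalues *
      star (hA.eigenvectorUnitary : Matrix n n ℝ) := by
  conv_lhs => rw [hA.spectral_theorem, Unitary.conjStarAlgAut_apply]
  simp [star_eq_conjTranspose, conjTranspose_eq_transpose_of_trivial, RCLike.ofReal_real_eq_id]

end Matrix

section StirlingFactorization

variable (R : Type*) [CommRing R] (k : ℕ)

-- The index `p : Fin k` stands for the paper's `p + 1 ∈ {1, …, k}`.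
def stirling2Matrix : Matrix (Fin k) (Fin k) R :=
  of fun p l => (stirling2 (p + 1) (l + 1) : R)

def signedStirling1 : Fin k → R :=
  fun p => (-1) ^ (k - (p + 1)) * (stirling1 k (p + 1) : R)

theorem cast_c_eq_transpose_mul_diagonal_mul_apply (l m : Fin k) :
    (c k (l + 1) (m + 1) : R) =
      ((stirling2Matrix R k)ᵀ * diagonal (signedStirling1 R k) * stirling2Matrix R k) l m := by
  have hreindex (f : ℕ → R) : ∑ p ∈ Icc 1 k, f p = ∑ p : Fin k, f (p + 1) := by
    rw [← Ico_add_one_right_eq_Icc, sum_Ico_eq_sum_range,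
      Fin.sum_univ_eq_sum_range (fun p => f (p + 1))]
    simp only [Nat.add_sub_cancel, add_comm]
  rw [mul_apply]
  push_cast [c, hreindex, mul_diagonal, transpose_apply, stirling2Matrix, signedStirling1, of_apply]
  exact sum_congr rfl fun p _ => by ring

theorem det_stirling2Matrix : (stirling2Matrix R k).det = 1 := by
  rw [det_of_isLowerTriangular]
  · refine prod_eq_one fun p _ => ?_
    simp [stirling2Matrix, stirling2_eq_stirlingSecond, Nat.stirlingSecond_self]
  · intro p l hpl
    simp only [stirling2Matrix, of_apply, stirling2_eq_stirlingSecond]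
    rw [Nat.stirlingSecond_eq_zero_of_lt (by simpa using hpl), Nat.cast_zero]

variable {R k} [LinearOrder R] [IsStrictOrderedRing R]

theorem signedStirling1_ne_zero (p : Fin k) : signedStirling1 R k p ≠ 0 :=
  mul_ne_zero (pow_ne_zero _ (neg_ne_zero.2 one_ne_zero))
    (Nat.cast_ne_zero.2 (stirling1_pos p.succ_pos (by omega)).ne')

theorem signedStirling1_neg_iff (p : Fin k) : signedStirling1 R k p < 0 ↔ Odd (p.rev : ℕ) := by
  have hs : (0 : R) < stirling1 k (p + 1) := Nat.cast_pos.2 (stirling1_pos p.succ_pos (by omega))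
  rw [signedStirling1, Fin.val_rev]
  rcases Nat.even_or_odd (k - (p + 1)) with h | h
  · simp [h.neg_one_pow, hs.le, Nat.not_odd_iff_even.2 h]
  · simp [h.neg_one_pow, hs, h]

theorem card_signedStirling1_neg : #{p | signedStirling1 R k p < 0} = k / 2 := by
  simp only [signedStirling1_neg_iff, Fin.card_filter_odd_rev]

theorem card_signedStirling1_pos : #{p | 0 < signedStirling1 R k p} = (k + 1) / 2 := by
  have := card_filter_pos_add_card_filter_neg_eq_card_iff.2
    (signedStirling1_ne_zero (R := R) (k := k))
  rw [card_signedStirling1_neg, Fintype.card_fin] at this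
  omega

end StirlingFactorization

theorem c_matrix_signature_general (k : ℕ)
    (M : Matrix (Fin k) (Fin k) ℝ)
    (hM : ∀ l m : Fin k, M l m = (c k (l.1 + 1) (m.1 + 1) : ℝ))
    (hHerm : M.IsHermitian) :
    (Finset.univ.filter fun i => 0 < hHerm.eigenvalues i).card = (k + 1) / 2 ∧
      (Finset.univ.filter fun i => hHerm.eigenvalues i < 0).card = k - (k + 1) / 2 ∧
      ∀ i, hHerm.eigenvalues i ≠ 0 := by
  have hStirling : M = (stirling2Matrix ℝ k)ᵀ * diagonal (signedStirling1 ℝ k) *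
      stirling2Matrix ℝ k := by
    ext l m
    rw [hM, cast_c_eq_transpose_mul_diagonal_mul_apply]
  have hS : IsUnit (stirling2Matrix ℝ k).det := by rw [det_stirling2Matrix]; exact isUnit_one
  have hU : IsUnit (star (hHerm.eigenvectorUnitary : Matrix (Fin k) (Fin k) ℝ)).det :=
    UnitaryGroup.det_isUnit (star hHerm.eigenvectorUnitary)
  have hSpec := hHerm.eq_transpose_mul_diagonal_eigenvalues_mul
  have hpos : #{i | 0 < hHerm.eigenvalues i} = (k + 1) / 2 := by
    rw [← sigPos_toQuadraticForm' hU hSpec, sigPos_toQuadraticForm' hS hStirling,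
      card_signedStirling1_pos]
  have hneg : #{i | hHerm.eigenvalues i < 0} = k / 2 := by
    rw [← sigNeg_toQuadraticForm' hU hSpec, sigNeg_toQuadraticForm' hS hStirling,
      card_signedStirling1_neg]
  refine ⟨hpos, by omega, card_filter_pos_add_card_filter_neg_eq_card_iff.1 ?_⟩
  rw [hpos, hneg, Fintype.card_fin]
  omega

/-- The real symmetric matrix `C^(k)` has exactly `⌈k/2⌉` positive eigenvalues and
`k - ⌈k/2⌉` negative eigenvalues, counted with multiplicity; `0` is not an eigenvalue. -/
theorem c_matrix_signature (k : ℕ) (hk : 1 ≤ k)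
    (M : Matrix (Fin k) (Fin k) ℝ)
    (hM : ∀ l m : Fin k, M l m = (c k (l.1 + 1) (m.1 + 1) : ℝ))
    (hHerm : M.IsHermitian) :
    (Finset.univ.filter fun i => 0 < hHerm.eigenvalues i).card = (k + 1) / 2 ∧
      (Finset.univ.filter fun i => hHerm.eigenvalues i < 0).card = k - (k + 1) / 2 ∧
      ∀ i, hHerm.eigenvalues i ≠ 0 :=
  c_matrix_signature_general k M hM hHerm
end

section
/- The coefficients c^{(k)}_{l,m} satisfy the recurrence c^{(k+1)}_{l+1,m+1} = c^{(k)}_{l,m} + (l+1)·c^{(k)}_{l+1,m} + (m+1)·c^{(k)}_{l,m+1} + ((l+1)(m+1) − k)·c^{(k)}_{l+1,m+1} for all integers k ≥ 1 and all integers l, m ≥ 0. -/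
lemma stirling1_zero_right (k : ℕ) (hk : 1 ≤ k) : stirling1 k 0 = 0 := by
  cases k with
  | zero => omega
  | succ n => rfl

lemma stirling1_eq_zero_of_lt : ∀ k p : ℕ, k < p → stirling1 k p = 0
  | 0, p + 1, _ => rfl
  | n + 1, p + 1, h => by
    have h1 : n < p + 1 := by omega
    have h2 : n < p := by omega
    simp [stirling1, stirling1_eq_zero_of_lt n (p+1) h1, stirling1_eq_zero_of_lt n p h2]

lemma sum_Icc_one {M : Type*} [AddCommMonoid M] (n : ℕ) (f : ℕ → M) :
    ∑ p ∈ Finset.Icc 1 n, f p = ∑ q ∈ Finset.range n, f (q + 1) := by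
  induction n with
  | zero => simp
  | succ n ih => rw [Finset.sum_Icc_succ_top (by omega), ih, Finset.sum_range_succ]

/-- The recurrence for the coefficients `c^(k)_{l,m}`. -/
theorem c_recurrence (k l m : ℕ) (hk : 1 ≤ k) :
    c (k + 1) (l + 1) (m + 1) =
      c k l m + ((l : ℤ) + 1) * c k (l + 1) m + ((m : ℤ) + 1) * c k l (m + 1) +
        (((l : ℤ) + 1) * ((m : ℤ) + 1) - (k : ℤ)) * c k (l + 1) (m + 1) := by
  have hc : ∀ a b : ℕ, c k a b = ∑ q ∈ Finset.range (k + 1),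
      (-1 : ℤ) ^ (k - q) * (stirling1 k q : ℤ) * (stirling2 q a : ℤ) * (stirling2 q b : ℤ) := by
    intro a b
    rw [c, sum_Icc_one, Finset.sum_range_succ']
    simp [stirling1_zero_right k hk]
  have key : (∑ q ∈ Finset.range (k + 1), (-1 : ℤ) ^ (k - q) * (stirling1 k (q + 1) : ℤ) *
        (stirling2 (q + 1) (l + 1) : ℤ) * (stirling2 (q + 1) (m + 1) : ℤ))
      = - ∑ q ∈ Finset.range (k + 1), (-1 : ℤ) ^ (k - q) * (stirling1 k q : ℤ) *
        (stirling2 q (l + 1) : ℤ) * (stirling2 q (m + 1) : ℤ) := by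
    rw [Finset.sum_range_succ, Finset.sum_range_succ',
      stirling1_eq_zero_of_lt k (k + 1) (by omega), stirling1_zero_right k hk]
    push_cast
    simp only [mul_zero, zero_mul, add_zero]
    rw [← Finset.sum_neg_distrib]
    refine Finset.sum_congr rfl fun q hq => ?_
    have hq' : q < k := Finset.mem_range.mp hq
    have he : k - q = (k - (q + 1)) + 1 := by omega
    rw [he, pow_succ]
    ring
  have hL : c (k + 1) (l + 1) (m + 1) = ∑ q ∈ Finset.range (k + 1),
      (-1 : ℤ) ^ (k - q) * (stirling1 (k + 1) (q + 1) : ℤ) *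
        (stirling2 (q + 1) (l + 1) : ℤ) * (stirling2 (q + 1) (m + 1) : ℤ) := by
    rw [c, sum_Icc_one]
    exact Finset.sum_congr rfl fun q _ => by rw [Nat.succ_sub_succ]
  have expand : ∀ q : ℕ, ((-1 : ℤ) ^ (k - q) * (stirling1 (k + 1) (q + 1) : ℤ) *
        (stirling2 (q + 1) (l + 1) : ℤ) * (stirling2 (q + 1) (m + 1) : ℤ))
      = (k : ℤ) * ((-1 : ℤ) ^ (k - q) * (stirling1 k (q + 1) : ℤ) *
          (stirling2 (q + 1) (l + 1) : ℤ) * (stirling2 (q + 1) (m + 1) : ℤ))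
        + ((-1 : ℤ) ^ (k - q) * (stirling1 k q : ℤ) * (stirling2 q l : ℤ) * (stirling2 q m : ℤ)
          + ((l : ℤ) + 1) * ((-1 : ℤ) ^ (k - q) * (stirling1 k q : ℤ) *
              (stirling2 q (l + 1) : ℤ) * (stirling2 q m : ℤ))
          + ((m : ℤ) + 1) * ((-1 : ℤ) ^ (k - q) * (stirling1 k q : ℤ) *
              (stirling2 q l : ℤ) * (stirling2 q (m + 1) : ℤ))
          + ((l : ℤ) + 1) * ((m : ℤ) + 1) * ((-1 : ℤ) ^ (k - q) * (stirling1 k q : ℤ) *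
              (stirling2 q (l + 1) : ℤ) * (stirling2 q (m + 1) : ℤ))) := by
    intro q
    have e1 : stirling1 (k + 1) (q + 1) = k * stirling1 k (q + 1) + stirling1 k q := rfl
    have e2 : stirling2 (q + 1) (l + 1) = (l + 1) * stirling2 q (l + 1) + stirling2 q l := rfl
    have e3 : stirling2 (q + 1) (m + 1) = (m + 1) * stirling2 q (m + 1) + stirling2 q m := rfl
    rw [e1, e2, e3]
    push_cast
    ring
  rw [hL, Finset.sum_congr rfl fun q _ => expand q, Finset.sum_add_distrib,
    Finset.sum_add_distrib, Finset.sum_add_distrib, Finset.sum_add_distrib,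
    ← Finset.mul_sum, ← Finset.mul_sum, ← Finset.mul_sum, ← Finset.mul_sum, key,
    ← hc l m, ← hc (l + 1) m, ← hc l (m + 1), ← hc (l + 1) (m + 1)]
  ring
end

section
/- For integers k, l, m ≥ 1 with max(l,m) ≤ k ≤ l·m, the number of subsets of the grid {1,…,l} × {1,…,m} of size exactly k whose projection to {1,…,l} is all of {1,…,l} and whose projection to {1,…,m} is all of {1,…,m} equals ∑_{h=0}^{l+m} ∑_{p=0}^{h} (-1)^h · C(l,p) · C(m, m−h+p) · C((l−p)(m−h+p), k), where C(·,·) denotes the binomial coefficient (with C(n,j) = 0 for j > n or j < 0). -/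
open Finset

set_option maxHeartbeats 1000000

private lemma ind_powerset {α : Type*} [Fintype α] [DecidableEq α] (T : Finset α) :
    (if T = ∅ then (1:ℤ) else 0) =
      ∑ A ∈ (univ : Finset α).powerset, if A ⊆ T then (-1:ℤ)^A.card else 0 := by
  rw [← Finset.sum_filter]
  have h : (univ : Finset α).powerset.filter (· ⊆ T) = T.powerset := by
    ext A; simp
  rw [h, Finset.sum_powerset_neg_one_pow_card]

private lemma powerset_sum_card {α : Type*} [Fintype α] [DecidableEq α] (f : ℕ → ℤ) :
    ∑ A ∈ (univ : Finset α).powerset, f A.card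
      = ∑ j ∈ range (Fintype.card α + 1), ((Fintype.card α).choose j : ℤ) * f j := by
  rw [Finset.sum_powerset, Finset.card_univ]
  refine Finset.sum_congr rfl fun j _ => ?_
  have h : ∑ A ∈ Finset.powersetCard j (univ : Finset α), f A.card
      = ∑ A ∈ Finset.powersetCard j (univ : Finset α), f j :=
    Finset.sum_congr rfl fun A hA => by rw [(Finset.mem_powersetCard.mp hA).2]
  rw [h, Finset.sum_const, Finset.card_powersetCard, Finset.card_univ, nsmul_eq_mul]

private def gg (k l m a b : ℕ) : ℤ :=
  (-1)^(a+b) * (l.choose a : ℤ) * (m.choose b : ℤ) * (((l-a)*(m-b)).choose k : ℤ)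

private lemma gg_zero {k l m a b : ℕ} (h : l < a ∨ m < b) : gg k l m a b = 0 := by
  unfold gg
  rcases h with h | h <;> rw [Nat.choose_eq_zero_of_lt h] <;> push_cast <;> ring

/-- Inclusion-exclusion count of `k`-subsets of an `l × m` grid meeting every row
and every column. -/
theorem grid_subset_count (k l m : ℕ) (hl : 1 ≤ l) (hm : 1 ≤ m)
    (hmax : max l m ≤ k) (hklm : k ≤ l * m) :
    (Nat.card {s : Finset (Fin l × Fin m) // s.card = k ∧
        (∀ a : Fin l, ∃ p ∈ s, p.1 = a) ∧ (∀ b : Fin m, ∃ p ∈ s, p.2 = b)} : ℤ) =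
      ∑ h ∈ Finset.range (l + m + 1), ∑ p ∈ Finset.range (h + 1),
        (-1 : ℤ) ^ h * (l.choose p : ℤ) *
          (if h ≤ m + p then
            ((m.choose (m + p - h) : ℤ) * (((l - p) * (m + p - h)).choose k : ℤ))
          else 0) := by
  classical
  set S := (univ : Finset (Finset (Fin l × Fin m))).filter (fun s => s.card = k) with hS
  -- Step 1: LHS as double sum over cardinalities
  have step1 : (Nat.card {s : Finset (Fin l × Fin m) // s.card = k ∧
        (∀ a : Fin l, ∃ p ∈ s, p.1 = a) ∧ (∀ b : Fin m, ∃ p ∈ s, p.2 = b)} : ℤ)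
      = ∑ a ∈ range (l+1), ∑ b ∈ range (m+1), gg k l m a b := by
    have hcard : (Nat.card {s : Finset (Fin l × Fin m) // s.card = k ∧
          (∀ a : Fin l, ∃ p ∈ s, p.1 = a) ∧ (∀ b : Fin m, ∃ p ∈ s, p.2 = b)})
        = ((univ : Finset (Finset (Fin l × Fin m))).filter (fun s => s.card = k ∧
          (∀ a : Fin l, ∃ p ∈ s, p.1 = a) ∧ (∀ b : Fin m, ∃ p ∈ s, p.2 = b))).card := by
      rw [Nat.card_eq_fintype_card, Fintype.card_subtype]
    rw [hcard, Finset.card_filter, Nat.cast_sum]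
    simp only [Nat.cast_ite, Nat.cast_one, Nat.cast_zero]
    have e0 : ∑ s ∈ (univ : Finset (Finset (Fin l × Fin m))),
          (if s.card = k ∧ (∀ a : Fin l, ∃ p ∈ s, p.1 = a) ∧ (∀ b : Fin m, ∃ p ∈ s, p.2 = b)
            then (1:ℤ) else 0)
        = ∑ s ∈ S, (if (univ \ s.image Prod.fst = ∅) then (1:ℤ) else 0)
            * (if (univ \ s.image Prod.snd = ∅) then (1:ℤ) else 0) := by
      rw [hS, Finset.sum_filter]
      refine Finset.sum_congr rfl fun s _ => ?_
      rw [ite_and]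
      by_cases hk : s.card = k
      · rw [if_pos hk, if_pos hk]
        have h1 : (∀ a : Fin l, ∃ p ∈ s, p.1 = a) ↔ (univ \ s.image Prod.fst = ∅) := by
          rw [Finset.sdiff_eq_empty_iff_subset, Finset.subset_iff]
          simp
        have h2 : (∀ b : Fin m, ∃ p ∈ s, p.2 = b) ↔ (univ \ s.image Prod.snd = ∅) := by
          rw [Finset.sdiff_eq_empty_iff_subset, Finset.subset_iff]
          simp
        simp only [h1, h2]
        split_ifs <;> simp_all
      · rw [if_neg hk, if_neg hk]
    rw [e0]
    have e1 : ∀ s ∈ S,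
        (if (univ \ s.image Prod.fst = ∅) then (1:ℤ) else 0)
          * (if (univ \ s.image Prod.snd = ∅) then (1:ℤ) else 0)
        = ∑ A ∈ (univ : Finset (Fin l)).powerset, ∑ B ∈ (univ : Finset (Fin m)).powerset,
            (if s ⊆ (univ \ A) ×ˢ (univ \ B) then (-1:ℤ)^(A.card + B.card) else 0) := by
      intro s _
      rw [ind_powerset, ind_powerset, Finset.sum_mul_sum]
      refine Finset.sum_congr rfl fun A _ => Finset.sum_congr rfl fun B _ => ?_
      have hc : (A ⊆ univ \ s.image Prod.fst ∧ B ⊆ univ \ s.image Prod.snd)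
          ↔ s ⊆ (univ \ A) ×ˢ (univ \ B) := by
        constructor
        · rintro ⟨h1, h2⟩ p hp
          rw [Finset.mem_product]
          refine ⟨Finset.mem_sdiff.mpr ⟨Finset.mem_univ _, fun hA => ?_⟩,
                  Finset.mem_sdiff.mpr ⟨Finset.mem_univ _, fun hB => ?_⟩⟩
          · exact (Finset.mem_sdiff.mp (h1 hA)).2 (Finset.mem_image.mpr ⟨p, hp, rfl⟩)
          · exact (Finset.mem_sdiff.mp (h2 hB)).2 (Finset.mem_image.mpr ⟨p, hp, rfl⟩)
        · intro h
          constructor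
          · intro a ha
            refine Finset.mem_sdiff.mpr ⟨Finset.mem_univ _, fun hi => ?_⟩
            obtain ⟨p, hp, hpa⟩ := Finset.mem_image.mp hi
            exact (Finset.mem_sdiff.mp (Finset.mem_product.mp (h hp)).1).2 (hpa ▸ ha)
          · intro b hb
            refine Finset.mem_sdiff.mpr ⟨Finset.mem_univ _, fun hi => ?_⟩
            obtain ⟨p, hp, hpb⟩ := Finset.mem_image.mp hi
            exact (Finset.mem_sdiff.mp (Finset.mem_product.mp (h hp)).2).2 (hpb ▸ hb)
      rw [pow_add]
      simp only [← hc, ite_and]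
      split_ifs <;> ring
    rw [Finset.sum_congr rfl e1]
    rw [Finset.sum_comm]
    have e2 : ∀ A ∈ (univ : Finset (Fin l)).powerset,
        (∑ s ∈ S, ∑ B ∈ (univ : Finset (Fin m)).powerset,
            (if s ⊆ (univ \ A) ×ˢ (univ \ B) then (-1:ℤ)^(A.card + B.card) else 0))
        = ∑ B ∈ (univ : Finset (Fin m)).powerset,
            (-1:ℤ)^(A.card + B.card) * (((l - A.card) * (m - B.card)).choose k : ℤ) := by
      intro A _
      rw [Finset.sum_comm]
      refine Finset.sum_congr rfl fun B _ => ?_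
      rw [← Finset.sum_filter]
      have hfil : S.filter (fun s => s ⊆ (univ \ A) ×ˢ (univ \ B))
          = Finset.powersetCard k ((univ \ A) ×ˢ (univ \ B)) := by
        ext s
        rw [hS, Finset.filter_filter]
        simp only [Finset.mem_filter, Finset.mem_univ, true_and, Finset.mem_powersetCard]
        tauto
      have hA : ((univ : Finset (Fin l)) \ A).card = l - A.card := by
        rw [Finset.card_sdiff_of_subset (Finset.subset_univ _), Finset.card_univ, Fintype.card_fin]
      have hB : ((univ : Finset (Fin m)) \ B).card = m - B.card := by
        rw [Finset.card_sdiff_of_subset (Finset.subset_univ _), Finset.card_univ, Fintype.card_fin]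
      rw [hfil, Finset.sum_const, Finset.card_powersetCard, Finset.card_product, hA, hB,
        nsmul_eq_mul]
      ring
    rw [Finset.sum_congr rfl e2]
    have e3 : ∑ A ∈ (univ : Finset (Fin l)).powerset,
          ∑ B ∈ (univ : Finset (Fin m)).powerset,
            (-1:ℤ)^(A.card + B.card) * (((l - A.card) * (m - B.card)).choose k : ℤ)
        = ∑ j ∈ range (Fintype.card (Fin l) + 1), ((Fintype.card (Fin l)).choose j : ℤ) *
            ∑ B ∈ (univ : Finset (Fin m)).powerset,
              (-1:ℤ)^(j + B.card) * (((l - j) * (m - B.card)).choose k : ℤ) :=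
      powerset_sum_card (fun a => ∑ B ∈ (univ : Finset (Fin m)).powerset,
        (-1:ℤ)^(a + B.card) * (((l - a) * (m - B.card)).choose k : ℤ))
    rw [e3, Fintype.card_fin]
    refine Finset.sum_congr rfl fun a _ => ?_
    have e4 : ∑ B ∈ (univ : Finset (Fin m)).powerset,
          (-1:ℤ)^(a + B.card) * (((l - a) * (m - B.card)).choose k : ℤ)
        = ∑ j ∈ range (Fintype.card (Fin m) + 1), ((Fintype.card (Fin m)).choose j : ℤ) *
            ((-1:ℤ)^(a + j) * (((l - a) * (m - j)).choose k : ℤ)) :=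
      powerset_sum_card (fun b => (-1:ℤ)^(a + b) * (((l - a) * (m - b)).choose k : ℤ))
    rw [e4, Fintype.card_fin, Finset.mul_sum]
    refine Finset.sum_congr rfl fun b _ => ?_
    unfold gg
    ring
  rw [step1]
  -- Step 2: extend to the full rectangle
  have step2 : ∑ a ∈ range (l+1), ∑ b ∈ range (m+1), gg k l m a b
      = ∑ a ∈ range (l+m+1), ∑ b ∈ range (l+m+1), gg k l m a b := by
    have inner : ∀ a, (∑ b ∈ range (m+1), gg k l m a b)
        = ∑ b ∈ range (l+m+1), gg k l m a b := by
      intro a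
      apply Finset.sum_subset (Finset.range_subset_range.mpr (by omega))
      intro b _ hb
      exact gg_zero (Or.inr (by simp only [Finset.mem_range] at hb; omega))
    calc ∑ a ∈ range (l+1), ∑ b ∈ range (m+1), gg k l m a b
        = ∑ a ∈ range (l+1), ∑ b ∈ range (l+m+1), gg k l m a b :=
          Finset.sum_congr rfl fun a _ => inner a
      _ = ∑ a ∈ range (l+m+1), ∑ b ∈ range (l+m+1), gg k l m a b := by
          apply Finset.sum_subset (Finset.range_subset_range.mpr (by omega))
          intro a _ ha
          exact Finset.sum_eq_zero fun b _ =>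
            gg_zero (Or.inl (by simp only [Finset.mem_range] at ha; omega))
  rw [step2]
  -- Step 3: RHS as triangle sum of gg
  have step3 : (∑ h ∈ Finset.range (l + m + 1), ∑ p ∈ Finset.range (h + 1),
        (-1 : ℤ) ^ h * (l.choose p : ℤ) *
          (if h ≤ m + p then
            ((m.choose (m + p - h) : ℤ) * (((l - p) * (m + p - h)).choose k : ℤ))
          else 0))
      = ∑ h ∈ range (l+m+1), ∑ p ∈ range (h+1), gg k l m p (h - p) := by
    refine Finset.sum_congr rfl fun h _ => Finset.sum_congr rfl fun p hp => ?_
    have hp' : p ≤ h := Nat.lt_succ_iff.mp (Finset.mem_range.mp hp)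
    unfold gg
    by_cases hcase : h ≤ m + p
    · rw [if_pos hcase]
      have h1 : m + p - h = m - (h - p) := by omega
      have h3 : p + (h - p) = h := by omega
      rw [h1, Nat.choose_symm (by omega : h - p ≤ m), h3]
      ring
    · rw [if_neg hcase, Nat.choose_eq_zero_of_lt (by omega : m < h - p)]
      push_cast; ring
  rw [step3]
  -- Step 4: triangle sum equals rectangle sum
  rw [Finset.sum_sigma' (range (l+m+1)) (fun h => range (h+1)) (fun h p => gg k l m p (h-p))]
  rw [← Finset.sum_product (range (l+m+1)) (range (l+m+1)) (fun x => gg k l m x.1 x.2)]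
  have hbij : ∑ x ∈ (range (l+m+1)).sigma (fun h => range (h+1)), gg k l m x.2 (x.1 - x.2)
      = ∑ x ∈ (range (l+m+1) ×ˢ range (l+m+1)).filter (fun x => x.1 + x.2 < l+m+1),
          gg k l m x.1 x.2 := by
    refine Finset.sum_nbij' (fun x => (x.2, x.1 - x.2)) (fun x => ⟨x.1 + x.2, x.1⟩)
      ?_ ?_ ?_ ?_ ?_
    · intro x hx
      simp only [Finset.mem_sigma, Finset.mem_range] at hx
      simp only [Finset.mem_filter, Finset.mem_product, Finset.mem_range]
      omega
    · intro x hx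
      simp only [Finset.mem_filter, Finset.mem_product, Finset.mem_range] at hx
      simp only [Finset.mem_sigma, Finset.mem_range]
      omega
    · rintro ⟨h, p⟩ hx
      simp only [Finset.mem_sigma, Finset.mem_range] at hx
      have h3 : p + (h - p) = h := by omega
      simp [h3]
    · intro x hx
      simp
    · intro x hx
      rfl
  rw [hbij]
  exact (Finset.sum_subset (Finset.filter_subset _ _) (fun x hx hxf => by
    simp only [Finset.mem_product, Finset.mem_range] at hx
    simp only [Finset.mem_filter, Finset.mem_product, Finset.mem_range, not_and, not_lt] at hxf
    exact gg_zero (by omega))).symm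
end

section
/- For integers k, l, m ≥ 1 with l, m ≤ k, one has l! · m! · c^{(k)}_{l,m} = k! · ∑_{h=0}^{l+m} ∑_{p=0}^{h} (-1)^h · C(l,p) · C(m, m−h+p) · C((l−p)(m−h+p), k), where C(·,·) denotes the binomial coefficient (with C(n,j) = 0 for j > n or j < 0). -/
open Nat

lemma stirling1_eq_zero_s11 {k q : ℕ} (h : k < q) : stirling1 k q = 0 := by
  induction k generalizing q with
  | zero => cases q with | zero => omega | succ q => rfl
  | succ k ih =>
    cases q with
    | zero => omega
    | succ q =>
      show k * stirling1 k (q+1) + stirling1 k q = 0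
      rw [ih (by omega), ih (by omega), mul_zero]

lemma neg_one_pow_sub {a b : ℕ} (h : b ≤ a) :
    (-1:ℤ)^(a-b) = (-1)^a * (-1)^b := by
  rw [← pow_add]
  conv_lhs => rw [neg_one_pow_eq_pow_mod_two]
  conv_rhs => rw [neg_one_pow_eq_pow_mod_two]
  congr 1
  omega

lemma choose_succ_int (n k : ℕ) :
    ((n:ℤ) - k) * (n.choose k) = ((k:ℤ)+1) * (n.choose (k+1)) := by
  rcases le_or_gt k n with h | h
  · have h1 := Nat.choose_succ_right_eq n k
    zify [h] at h1
    linarith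
  · rw [Nat.choose_eq_zero_of_lt h, Nat.choose_eq_zero_of_lt (by omega)]; simp

lemma sum_stirling1 (k n : ℕ) :
    ∑ p ∈ Finset.range (k+1), (-1:ℤ)^p * stirling1 k p * (n:ℤ)^p
      = (-1)^k * k ! * (n.choose k) := by
  induction k with
  | zero => simp [stirling1]
  | succ k ih =>
    have hks : (k:ℤ) * stirling1 k 0 = 0 := by
      cases k with
      | zero => simp
      | succ k => simp [show stirling1 (k+1) 0 = 0 from rfl]
    have hA : ∑ p ∈ Finset.range (k+1), (-1:ℤ)^p * stirling1 k (p+1) * (n:ℤ)^(p+1)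
        = (stirling1 k 0 : ℤ) - ∑ p ∈ Finset.range (k+1), (-1:ℤ)^p * stirling1 k p * (n:ℤ)^p := by
      have h1 : ∑ p ∈ Finset.range (k+2), (-1:ℤ)^p * stirling1 k p * (n:ℤ)^p
          = ∑ p ∈ Finset.range (k+1), (-1:ℤ)^p * stirling1 k p * (n:ℤ)^p := by
        rw [Finset.sum_range_succ, stirling1_eq_zero_s11 (by omega)]; simp
      conv_rhs => rw [← h1, Finset.sum_range_succ']
      have h2 : ∀ p ∈ Finset.range (k+1), (-1:ℤ)^p * stirling1 k (p+1) * (n:ℤ)^(p+1)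
          = -((-1:ℤ)^(p+1) * stirling1 k (p+1) * (n:ℤ)^(p+1)) := by intros; ring
      rw [Finset.sum_congr rfl h2, Finset.sum_neg_distrib]
      push_cast; ring
    rw [Finset.sum_range_succ']
    have h0 : ((-1:ℤ))^0 * stirling1 (k+1) 0 * (n:ℤ)^0 = 0 := by
      simp [show stirling1 (k+1) 0 = 0 from rfl]
    rw [h0, add_zero]
    have hterm : ∀ p ∈ Finset.range (k+1),
        (-1:ℤ)^(p+1) * stirling1 (k+1) (p+1) * (n:ℤ)^(p+1)
        = -((k:ℤ) * ((-1)^p * stirling1 k (p+1) * (n:ℤ)^(p+1)))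
          - (n:ℤ) * ((-1)^p * stirling1 k p * (n:ℤ)^p) := by
      intro p _
      rw [show stirling1 (k+1) (p+1) = k * stirling1 k (p+1) + stirling1 k p from rfl]
      push_cast; ring
    rw [Finset.sum_congr rfl hterm, Finset.sum_sub_distrib, Finset.sum_neg_distrib,
        ← Finset.mul_sum, ← Finset.mul_sum, hA, ih]
    push_cast [Nat.factorial_succ]
    linear_combination (-1:ℤ)^(k+1) * (k ! : ℤ) * choose_succ_int n k - hks


lemma sum_stirling2 (p l : ℕ) :
    (l ! : ℤ) * stirling2 p l
      = (-1)^l * ∑ i ∈ Finset.range (l+1), (-1:ℤ)^i * (l.choose i) * (i:ℤ)^p := by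
  induction p generalizing l with
  | zero =>
    cases l with
    | zero => simp [stirling2]
    | succ l =>
      rw [show stirling2 0 (l+1) = 0 from rfl]
      simp only [pow_zero, mul_one, Int.alternating_sum_range_choose]
      simp
  | succ p ih =>
    cases l with
    | zero =>
      rw [show stirling2 (p+1) 0 = 0 from rfl]
      simp
    | succ l =>
      have key1 : ∑ i ∈ Finset.range (l+2), (-1:ℤ)^i * ((l+1).choose i) * (i:ℤ)^(p+1)
          = -((l:ℤ)+1) * ∑ i ∈ Finset.range (l+1), (-1:ℤ)^i * (l.choose i) * ((i:ℤ)+1)^p := by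
        rw [Finset.sum_range_succ', Finset.mul_sum]
        have h0 : (-1:ℤ)^0 * ((l+1).choose 0) * ((0:ℕ):ℤ)^(p+1) = 0 := by simp
        rw [h0, add_zero]
        apply Finset.sum_congr rfl
        intro i _
        have hc' : (((l+1).choose (i+1) : ℤ)) * ((i:ℤ)+1) = ((l:ℤ)+1) * (l.choose i) := by
          exact_mod_cast (Nat.add_one_mul_choose_eq l i).symm
        push_cast
        calc (-1:ℤ)^(i+1) * ((l+1).choose (i+1)) * ((i:ℤ)+1)^(p+1)
            = (-1)^(i+1) * (((l+1).choose (i+1) : ℤ) * ((i:ℤ)+1)) * ((i:ℤ)+1)^p := by ring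
          _ = -((l:ℤ)+1) * ((-1)^i * (l.choose i) * ((i:ℤ)+1)^p) := by rw [hc']; ring
      have key2 : ∑ i ∈ Finset.range (l+2), (-1:ℤ)^i * ((l+1).choose i) * (i:ℤ)^p
          = ∑ i ∈ Finset.range (l+1), (-1:ℤ)^i * (l.choose i) * (i:ℤ)^p
            - ∑ i ∈ Finset.range (l+1), (-1:ℤ)^i * (l.choose i) * ((i:ℤ)+1)^p := by
        rw [Finset.sum_range_succ']
        have hsplit : ∀ i ∈ Finset.range (l+1),
            (-1:ℤ)^(i+1) * ((l+1).choose (i+1)) * ((i+1:ℕ):ℤ)^p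
            = (-1:ℤ)^(i+1) * (l.choose (i+1)) * ((i+1:ℕ):ℤ)^p
              - (-1:ℤ)^i * (l.choose i) * ((i:ℤ)+1)^p := by
          intro i _
          rw [Nat.choose_succ_succ' l i]
          push_cast; ring
        rw [Finset.sum_congr rfl hsplit, Finset.sum_sub_distrib]
        have hshift : ∑ i ∈ Finset.range (l+1), (-1:ℤ)^(i+1) * (l.choose (i+1)) * ((i+1:ℕ):ℤ)^p
            = ∑ i ∈ Finset.range (l+1), (-1:ℤ)^i * (l.choose i) * (i:ℤ)^p
              - (-1:ℤ)^0 * (l.choose 0) * ((0:ℕ):ℤ)^p := by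
          have h2 : ∑ i ∈ Finset.range (l+2), (-1:ℤ)^i * (l.choose i) * (i:ℤ)^p
              = ∑ i ∈ Finset.range (l+1), (-1:ℤ)^i * (l.choose i) * (i:ℤ)^p := by
            rw [Finset.sum_range_succ, Nat.choose_eq_zero_of_lt (by omega)]; simp
          conv_rhs => rw [← h2, Finset.sum_range_succ']
          ring
        rw [hshift]
        have : ((-1:ℤ)^0 * ((l+1).choose 0) * ((0:ℕ):ℤ)^p) = ((-1:ℤ)^0 * (l.choose 0) * ((0:ℕ):ℤ)^p) := by
          simp
        rw [this]
        ring
      rw [show stirling2 (p+1) (l+1) = (l+1) * stirling2 p (l+1) + stirling2 p l from rfl]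
      rw [key1]
      push_cast [Nat.factorial_succ]
      have e1 := ih (l+1)
      have e2 := ih l
      push_cast [Nat.factorial_succ] at e1
      rw [key2] at e1
      -- goal : (l+1)! * ((l+1) * S(p,l+1) + S(p,l)) = (-1)^(l+1) * (-(l+1) * U)
      -- e1: (l+1)*l! * S(p,l+1) = (-1)^(l+1) * (T - U), e2 : l! * S(p,l) = (-1)^l * T
      have hsgn : (-1:ℤ)^(l+1) = -(-1:ℤ)^l := by ring
      rw [hsgn] at e1 ⊢
      linear_combination ((l:ℤ)+1) * e1 + ((l:ℤ)+1) * e2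


theorem reindex (k l m : ℕ) (hl : 1 ≤ l) (hm : 1 ≤ m) :
    (∑ h ∈ Finset.range (l + m + 1), ∑ p ∈ Finset.range (h + 1),
      (-1 : ℤ) ^ h * (l.choose p : ℤ) *
        (if h ≤ m + p then
          ((m.choose (m + p - h) : ℤ) * (((l - p) * (m + p - h)).choose k : ℤ))
        else 0))
    = ∑ i ∈ Finset.range (l+1), ∑ j ∈ Finset.range (m+1),
        (-1:ℤ)^(l+i) * (-1:ℤ)^(m+j) * (l.choose i) * (m.choose j)
          * (((i*j).choose k : ℤ)) := by
  rw [Finset.sum_sigma']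
  rw [← Finset.sum_product']
  rw [← Finset.sum_filter_of_ne (p := fun x : Σ _ : ℕ, ℕ => x.2 ≤ l ∧ x.1 ≤ m + x.2)
    (by
      intro x hx hne
      constructor
      · by_contra hc
        push_neg at hc
        rw [Nat.choose_eq_zero_of_lt hc] at hne
        simp at hne
      · by_contra hc
        rw [if_neg hc] at hne
        simp at hne)]
  apply Finset.sum_nbij' (i := fun x : Σ _ : ℕ, ℕ => ((l - x.2, m + x.2 - x.1) : ℕ × ℕ))
    (j := fun y : ℕ × ℕ => (⟨(l - y.1) + (m - y.2), l - y.1⟩ : Σ _ : ℕ, ℕ))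
  · rintro ⟨h, p⟩ hx
    simp only [Finset.mem_filter, Finset.mem_sigma, Finset.mem_range] at hx
    simp only [Finset.mem_product, Finset.mem_range]
    omega
  · rintro ⟨i, j⟩ hy
    simp only [Finset.mem_product, Finset.mem_range] at hy
    simp only [Finset.mem_filter, Finset.mem_sigma, Finset.mem_range]
    omega
  · rintro ⟨h, p⟩ hx
    simp only [Finset.mem_filter, Finset.mem_sigma, Finset.mem_range] at hx
    simp only [Sigma.ext_iff, heq_eq_eq]
    omega
  · rintro ⟨i, j⟩ hy
    simp only [Finset.mem_product, Finset.mem_range] at hy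
    simp only [Prod.mk.injEq]
    omega
  · rintro ⟨h, p⟩ hx
    simp only [Finset.mem_filter, Finset.mem_sigma, Finset.mem_range] at hx
    obtain ⟨⟨h1, h2⟩, h3, h4⟩ := hx
    dsimp only
    rw [if_pos h4, Nat.choose_symm h3]
    have hsgn : (-1:ℤ)^(l+(l-p)) * (-1:ℤ)^(m+(m+p-h)) = (-1:ℤ)^h := by
      rw [← pow_add]
      conv_lhs => rw [neg_one_pow_eq_pow_mod_two]
      conv_rhs => rw [neg_one_pow_eq_pow_mod_two]
      congr 1
      omega
    linear_combination -((l.choose p : ℤ) * (m.choose (m+p-h) : ℤ)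
      * (((l-p)*(m+p-h)).choose k : ℤ)) * hsgn



/-- The inclusion-exclusion formula for `c^(k)_{l,m}`. -/
theorem c_inclusion_exclusion (k l m : ℕ) (hk : 1 ≤ k) (hl : 1 ≤ l) (hm : 1 ≤ m)
    (hlk : l ≤ k) (hmk : m ≤ k) :
    (l ! : ℤ) * (m ! : ℤ) * c k l m =
      (k ! : ℤ) *
        ∑ h ∈ Finset.range (l + m + 1), ∑ p ∈ Finset.range (h + 1),
          (-1 : ℤ) ^ h * (l.choose p : ℤ) *
            (if h ≤ m + p then
              ((m.choose (m + p - h) : ℤ) * (((l - p) * (m + p - h)).choose k : ℤ))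
            else 0) := by
  -- the Icc version of `sum_stirling1`
  have key : ∀ n : ℕ, ∑ p ∈ Finset.Icc 1 k, (-1:ℤ)^p * stirling1 k p * (n:ℤ)^p
      = (-1)^k * k ! * (n.choose k) := by
    intro n
    have hins : Finset.range (k+1) = insert 0 (Finset.Icc 1 k) := by
      ext x
      simp only [Finset.mem_range, Finset.mem_insert, Finset.mem_Icc]
      omega
    have hs := sum_stirling1 k n
    rw [hins, Finset.sum_insert (by simp)] at hs
    obtain ⟨k', rfl⟩ : ∃ k', k = k' + 1 := ⟨k-1, by omega⟩
    simpa [show stirling1 (k'+1) 0 = 0 from rfl] using hs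
  have hL : (l ! : ℤ) * (m ! : ℤ) * c k l m
      = ∑ i ∈ Finset.range (l+1), ∑ j ∈ Finset.range (m+1),
          (-1:ℤ)^(l+i) * (-1:ℤ)^(m+j) * (l.choose i) * (m.choose j)
            * ((k ! : ℤ) * (((i*j).choose k : ℕ) : ℤ)) := by
    rw [c, Finset.mul_sum]
    have step1 : ∀ p ∈ Finset.Icc 1 k,
        (l ! : ℤ) * (m ! : ℤ) * ((-1:ℤ)^(k-p) * stirling1 k p * stirling2 p l * stirling2 p m)
        = ∑ i ∈ Finset.range (l+1), ∑ j ∈ Finset.range (m+1),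
            ((-1:ℤ)^(l+i) * (-1:ℤ)^(m+j) * (l.choose i) * (m.choose j))
              * ((-1:ℤ)^k * ((-1:ℤ)^p * stirling1 k p * (((i*j:ℕ)):ℤ)^p)) := by
      intro p hp
      have hpk : p ≤ k := (Finset.mem_Icc.mp hp).2
      rw [neg_one_pow_sub hpk]
      have h2l := sum_stirling2 p l
      have h2m := sum_stirling2 p m
      calc (l ! : ℤ) * (m ! : ℤ) * ((-1:ℤ)^k * (-1:ℤ)^p * stirling1 k p * stirling2 p l * stirling2 p m)
          = ((-1:ℤ)^k * (-1:ℤ)^p * stirling1 k p) *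
              (((l ! : ℤ) * stirling2 p l) * ((m ! : ℤ) * stirling2 p m)) := by ring
        _ = ((-1:ℤ)^k * (-1:ℤ)^p * stirling1 k p) *
              (((-1:ℤ)^l * ∑ i ∈ Finset.range (l+1), (-1:ℤ)^i * (l.choose i) * (i:ℤ)^p)
                * ((-1:ℤ)^m * ∑ j ∈ Finset.range (m+1), (-1:ℤ)^j * (m.choose j) * (j:ℤ)^p)) := by
            rw [h2l, h2m]
        _ = ((-1:ℤ)^k * (-1:ℤ)^p * stirling1 k p * (-1:ℤ)^l * (-1:ℤ)^m) *
              ((∑ i ∈ Finset.range (l+1), (-1:ℤ)^i * (l.choose i) * (i:ℤ)^p)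
                * (∑ j ∈ Finset.range (m+1), (-1:ℤ)^j * (m.choose j) * (j:ℤ)^p)) := by ring
        _ = ((-1:ℤ)^k * (-1:ℤ)^p * stirling1 k p * (-1:ℤ)^l * (-1:ℤ)^m) *
              (∑ i ∈ Finset.range (l+1), ∑ j ∈ Finset.range (m+1),
                ((-1:ℤ)^i * (l.choose i) * (i:ℤ)^p) * ((-1:ℤ)^j * (m.choose j) * (j:ℤ)^p)) := by
            rw [Finset.sum_mul_sum]
        _ = _ := by
            rw [Finset.mul_sum]
            apply Finset.sum_congr rfl
            intro i _
            rw [Finset.mul_sum]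
            apply Finset.sum_congr rfl
            intro j _
            push_cast
            ring
    rw [Finset.sum_congr rfl step1, Finset.sum_comm]
    apply Finset.sum_congr rfl
    intro i _
    rw [Finset.sum_comm]
    apply Finset.sum_congr rfl
    intro j _
    rw [← Finset.mul_sum, ← Finset.mul_sum, key (i*j)]
    have hkk : (-1:ℤ)^k * (-1:ℤ)^k = 1 := by
      rw [← pow_add]
      exact Even.neg_one_pow ⟨k, rfl⟩
    linear_combination ((-1:ℤ)^(l+i) * (-1:ℤ)^(m+j) * (l.choose i) * (m.choose j)
      * (k ! : ℤ) * (((i*j).choose k : ℕ) : ℤ)) * hkk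
  rw [hL, reindex k l m hl hm, Finset.mul_sum]
  apply Finset.sum_congr rfl
  intro i _
  rw [Finset.mul_sum]
  apply Finset.sum_congr rfl
  intro j _
  ring
end
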